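/- arXiv:1401.5613 — 3 statements merged into one kernel-verified Lean document; each statement's English description precedes it below -/
import Mathlib

section
/- Factorization of the joint density: in the notation below, for every n ≥ 1, every 0 ≤ l < n and every (x₀, …, x_n) ∈ E^{n+1} such that S(x₀, …, x_{n−l−1}) ≠ 0, setting α := 1 − (1 − π) p^{n−l−1} L₀(x₀, …, x_{n−l−1}) / S(x₀, …, x_{n−l−1}), one has S(x₀, …, x_n) = S(x₀, …, x_{n−l−1}) · G_{l+1}(x_{n−l−1}, …, x_n, α). -/
open Finset

noncomputable section

/-- `L_m(x_k, …, x_N) = ∏_{r=k+1}^{N-m} f⁰(x_{r-1}, x_r) · ∏_{r=N-m+1}^{N} f¹(x_{r-1}, x_r)`. -/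
def Lfn {E : Type*} (f0 f1 : E → E → ℝ) (k N m : ℕ) (xv : ℕ → E) : ℝ :=
  (∏ r ∈ Finset.Icc (k + 1) (N - m), f0 (xv (r - 1)) (xv r)) *
    ∏ r ∈ Finset.Icc (N - m + 1) N, f1 (xv (r - 1)) (xv r)

/-- `S(x₀, …, x_m) = π L_m + (1-π)(∑_{i=1}^m p^{i-1} q L_{m-i+1} + p^m L₀)`. -/
def Sfn {E : Type*} (f0 f1 : E → E → ℝ) (p π : ℝ) (m : ℕ) (xv : ℕ → E) : ℝ :=
  π * Lfn f0 f1 0 m m xv +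
    (1 - π) * ((∑ i ∈ Finset.Icc 1 m, p ^ (i - 1) * (1 - p) * Lfn f0 f1 0 m (m - i + 1) xv) +
      p ^ m * Lfn f0 f1 0 m 0 xv)

/-- `G_{l+1}(x_k, …, x_{k+l+1}, α) = α L_{l+1} + (1-α)(∑_{i=0}^{l} p^{l-i} q L_{i+1} + p^{l+1} L₀)`. -/
def Gfn {E : Type*} (f0 f1 : E → E → ℝ) (p : ℝ) (k l : ℕ) (xv : ℕ → E) (α : ℝ) : ℝ :=
  α * Lfn f0 f1 k (k + l + 1) (l + 1) xv +
    (1 - α) *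
      ((∑ i ∈ Finset.range (l + 1), p ^ (l - i) * (1 - p) * Lfn f0 f1 k (k + l + 1) (i + 1) xv) +
        p ^ (l + 1) * Lfn f0 f1 k (k + l + 1) 0 xv)

/-- The posterior probability `Π_m = 1 - (1-π) p^m L₀(x₀,…,x_m) / S(x₀,…,x_m)`. -/
def PiPost {E : Type*} (f0 f1 : E → E → ℝ) (p π : ℝ) (m : ℕ) (xv : ℕ → E) : ℝ :=
  1 - (1 - π) * p ^ m * Lfn f0 f1 0 m 0 xv / Sfn f0 f1 p π m xv

end

/-!
Put `k = n - l - 1`. Every term of `S(x₀, …, x_n)` is a product `L_m(x₀, …, x_n)`, which splits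
at `x_k` into a factor on `(x₀, …, x_k)` and a factor on `(x_k, …, x_n)`: if the change point lies
at or after `k` the first factor is `L₀(x₀, …, x_k)`, otherwise the second is
`L_{l+1}(x_k, …, x_n)`. Grouping the terms accordingly gives
`S(x₀, …, x_n) = (S_k - c) L_{l+1}(x_k, …, x_n) + c M(x_k, …, x_n)`
with `c = (1-π) p^k L₀(x₀, …, x_k)`,
where `M = geomMix` is the mixture over the change point that also appears in `G_{l+1}`; and
`S_k G_{l+1}(α)` is the same expression once `α = 1 - c / S_k`.
-/

-- The mixture of the `L_j(x_k, …, x_N)` over a geometric change point, as in `S` and `G`.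
def geomMix {E : Type*} (f0 f1 : E → E → ℝ) (p : ℝ) (k N : ℕ) (xv : ℕ → E) : ℝ :=
  (∑ j ∈ range (N - k), p ^ (N - k - 1 - j) * (1 - p) * Lfn f0 f1 k N (j + 1) xv) +
    p ^ (N - k) * Lfn f0 f1 k N 0 xv

section Factorization

variable {E : Type*} (f0 f1 : E → E → ℝ) (xv : ℕ → E)

lemma Lfn_eq_prod_Ioc (a N m : ℕ) :
    Lfn f0 f1 a N m xv =
      (∏ r ∈ Ioc a (N - m), f0 (xv (r - 1)) (xv r)) *
        ∏ r ∈ Ioc (N - m) N, f1 (xv (r - 1)) (xv r) := by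
  simp only [Lfn, Icc_add_one_left_eq_Ioc]

lemma Lfn_eq_Lfn_zero_mul {a k N m : ℕ} (hak : a ≤ k) (hkN : k ≤ N) (hm : m ≤ N - k) :
    Lfn f0 f1 a N m xv = Lfn f0 f1 a k 0 xv * Lfn f0 f1 k N m xv := by
  simp only [Lfn_eq_prod_Ioc, Nat.sub_zero, Ioc_self, prod_empty, mul_one]
  rw [← prod_Ioc_consecutive _ hak (by omega : k ≤ N - m), mul_assoc]

lemma Lfn_eq_mul_Lfn_sub {a k N m : ℕ} (hkN : k ≤ N) (hm : N - k ≤ m) (hmN : m ≤ N) :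
    Lfn f0 f1 a N m xv = Lfn f0 f1 a k (m - (N - k)) xv * Lfn f0 f1 k N (N - k) xv := by
  simp only [Lfn_eq_prod_Ioc, show k - (m - (N - k)) = N - m by omega, Nat.sub_sub_self hkN,
    Ioc_self, prod_empty, one_mul]
  rw [mul_assoc, prod_Ioc_consecutive _ (by omega : N - m ≤ k) hkN]

lemma Sfn_eq_geomMix (p π : ℝ) (m : ℕ) :
    Sfn f0 f1 p π m xv = π * Lfn f0 f1 0 m m xv + (1 - π) * geomMix f0 f1 p 0 m xv := by
  have hreflect : ∑ i ∈ Icc 1 m, p ^ (i - 1) * (1 - p) * Lfn f0 f1 0 m (m - i + 1) xv =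
      ∑ j ∈ range m, p ^ (m - 1 - j) * (1 - p) * Lfn f0 f1 0 m (j + 1) xv := by
    refine sum_nbij' (fun i => m - i) (fun j => m - j) ?_ ?_ ?_ ?_ ?_ <;> intro i hi <;>
      simp only [mem_Icc, mem_range] at hi ⊢
    on_goal 5 => rw [show m - 1 - (m - i) = i - 1 by omega]
    all_goals omega
  rw [Sfn, geomMix, hreflect, Nat.sub_zero]

lemma Gfn_eq_geomMix (p : ℝ) (k l : ℕ) (α : ℝ) :
    Gfn f0 f1 p k l xv α =
      α * Lfn f0 f1 k (k + l + 1) (l + 1) xv + (1 - α) * geomMix f0 f1 p k (k + l + 1) xv := by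
  simp only [Gfn, geomMix, show k + l + 1 - k = l + 1 by omega, Nat.add_sub_cancel]

lemma geomMix_split (p : ℝ) {a k N : ℕ} (hak : a ≤ k) (hkN : k ≤ N) :
    geomMix f0 f1 p a N xv =
      (geomMix f0 f1 p a k xv - p ^ (k - a) * Lfn f0 f1 a k 0 xv) * Lfn f0 f1 k N (N - k) xv +
        p ^ (k - a) * Lfn f0 f1 a k 0 xv * geomMix f0 f1 p k N xv := by
  have hlate : ∀ j ∈ range (N - k), p ^ (N - a - 1 - j) * (1 - p) * Lfn f0 f1 a N (j + 1) xv =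
      p ^ (k - a) * Lfn f0 f1 a k 0 xv *
        (p ^ (N - k - 1 - j) * (1 - p) * Lfn f0 f1 k N (j + 1) xv) := by
    intro j hj
    rw [mem_range] at hj
    rw [Lfn_eq_Lfn_zero_mul f0 f1 xv hak hkN (by omega),
      show N - a - 1 - j = (k - a) + (N - k - 1 - j) by omega, pow_add]
    ring
  have hearly : ∀ j ∈ range (k - a),
      p ^ (N - a - 1 - (N - k + j)) * (1 - p) * Lfn f0 f1 a N (N - k + j + 1) xv =
        p ^ (k - a - 1 - j) * (1 - p) * Lfn f0 f1 a k (j + 1) xv * Lfn f0 f1 k N (N - k) xv := by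
    intro j hj
    rw [mem_range] at hj
    rw [Lfn_eq_mul_Lfn_sub f0 f1 xv hkN (by omega) (by omega),
      show N - k + j + 1 - (N - k) = j + 1 by omega,
      show N - a - 1 - (N - k + j) = k - a - 1 - j by omega]
    ring
  have hnone : p ^ (N - a) * Lfn f0 f1 a N 0 xv =
      p ^ (k - a) * Lfn f0 f1 a k 0 xv * (p ^ (N - k) * Lfn f0 f1 k N 0 xv) := by
    rw [Lfn_eq_Lfn_zero_mul f0 f1 xv hak hkN (Nat.zero_le _),
      show N - a = (k - a) + (N - k) by omega, pow_add]
    ring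
  have hrange : range (N - a) = range ((N - k) + (k - a)) := by congr 1; omega
  simp only [geomMix]
  rw [hrange, sum_range_add, sum_congr rfl hlate, sum_congr rfl hearly, ← mul_sum, ← sum_mul, hnone]
  ring

lemma Sfn_split (p π : ℝ) {k N : ℕ} (hkN : k ≤ N) :
    Sfn f0 f1 p π N xv =
      (Sfn f0 f1 p π k xv - (1 - π) * p ^ k * Lfn f0 f1 0 k 0 xv) * Lfn f0 f1 k N (N - k) xv +
        (1 - π) * p ^ k * Lfn f0 f1 0 k 0 xv * geomMix f0 f1 p k N xv := by
  have hfull : Lfn f0 f1 0 N N xv = Lfn f0 f1 0 k k xv * Lfn f0 f1 k N (N - k) xv := by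
    rw [Lfn_eq_mul_Lfn_sub f0 f1 xv hkN (Nat.sub_le N k) le_rfl, Nat.sub_sub_self hkN]
  rw [Sfn_eq_geomMix, Sfn_eq_geomMix, hfull, geomMix_split f0 f1 xv p (Nat.zero_le k) hkN,
    Nat.sub_zero]
  ring

end Factorization

theorem stmt6_general {E : Type*} (f0 f1 : E → E → ℝ) (p π : ℝ)
    (n l : ℕ) (hl : l < n) (xv : ℕ → E)
    (hS : Sfn f0 f1 p π (n - l - 1) xv ≠ 0) :
    Sfn f0 f1 p π n xv =
      Sfn f0 f1 p π (n - l - 1) xv *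
        Gfn f0 f1 p (n - l - 1) l xv
          (1 - (1 - π) * p ^ (n - l - 1) * Lfn f0 f1 0 (n - l - 1) 0 xv /
            Sfn f0 f1 p π (n - l - 1) xv) := by
  set k := n - l - 1 with hk
  have hn : n = k + l + 1 := by omega
  rw [Gfn_eq_geomMix, ← hn, Sfn_split f0 f1 xv p π (show k ≤ n by omega),
    show n - k = l + 1 by omega]
  field_simp
  ring

/-- Factorization of the joint density: for `0 ≤ l < n` and
`α = 1 - (1-π) p^{n-l-1} L₀(x₀,…,x_{n-l-1}) / S(x₀,…,x_{n-l-1})`, one has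
`S(x₀,…,x_n) = S(x₀,…,x_{n-l-1}) · G_{l+1}(x_{n-l-1},…,x_n, α)`. -/
theorem stmt6 {E : Type*} (f0 f1 : E → E → ℝ) (p π : ℝ)
    (hp : p ∈ Set.Ioo (0 : ℝ) 1) (hπ : π ∈ Set.Ioo (0 : ℝ) 1)
    (n l : ℕ) (hn : 1 ≤ n) (hl : l < n) (xv : ℕ → E)
    (hS : Sfn f0 f1 p π (n - l - 1) xv ≠ 0) :
    Sfn f0 f1 p π n xv =
      Sfn f0 f1 p π (n - l - 1) xv *
        Gfn f0 f1 p (n - l - 1) l xv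
          (1 - (1 - π) * p ^ (n - l - 1) * Lfn f0 f1 0 (n - l - 1) 0 xv /
            Sfn f0 f1 p π (n - l - 1) xv) :=
  stmt6_general f0 f1 p π n l hl xv hS
end

section
/- Recursive formula for the posterior: in the notation below, for every n ≥ 1, every 0 ≤ l < n and every (x₀, …, x_n) ∈ E^{n+1} with S(x₀, …, x_{n−l−1}) ≠ 0 and S(x₀, …, x_n) ≠ 0, defining Π_m := 1 − (1 − π) p^m L₀(x₀, …, x_m) / S(x₀, …, x_m), one has Π_n = (Π_{n−l−1} L_{l+1}(x_{n−l−1}, …, x_n) + (1 − Π_{n−l−1}) q ∑_{k=0}^{l} p^{l−k} L_{k+1}(x_{n−l−1}, …, x_n)) / G_{l+1}(x_{n−l−1}, …, x_n, Π_{n−l−1}). -/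
open Finset

/-!
Write `S_m = A_m + B_m`, where `B_m = (1 - π) p^m L₀(x₀, …, x_m)` is the weight of "no change up to
time `m`" and `A_m` the weight of the remaining change times, so that `Π_m = A_m / S_m`. Cutting the
likelihoods at time `k = n - l - 1` gives `A_n = A_k L_{l+1} + B_k q ∑_{i ≤ l} p^{l-i} L_{i+1}` and
`B_n = B_k p^{l+1} L₀`, with all new likelihoods evaluated at `(x_k, …, x_n)`. Dividing by `S_k`
turns `A_k, B_k` into `Π_k, 1 - Π_k`, so `A_n = S_k · (numerator)` and `S_n = S_k · G_{l+1}(Π_k)`;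
the common factor `S_k` cancels in `Π_n = A_n / S_n`.
-/

theorem Finset.prod_Icc_succ_mul_prod_Icc_succ {M : Type*} [CommMonoid M] (g : ℕ → M) {a b c : ℕ}
    (hab : a ≤ b) (hbc : b ≤ c) :
    (∏ r ∈ Icc (a + 1) b, g r) * ∏ r ∈ Icc (b + 1) c, g r = ∏ r ∈ Icc (a + 1) c, g r := by
  simp only [Icc_add_one_left_eq_Ioc]
  exact prod_Ioc_consecutive g hab hbc

section Likelihood

variable {E : Type*} (f0 f1 : E → E → ℝ) (xv : ℕ → E)

theorem Lfn_eq_mul_of_le {a k N m : ℕ} (hak : a ≤ k) (hkN : k + m ≤ N) :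
    Lfn f0 f1 a N m xv = Lfn f0 f1 a k 0 xv * Lfn f0 f1 k N m xv := by
  unfold Lfn
  rw [Nat.sub_zero, Icc_eq_empty (by omega : ¬k + 1 ≤ k), prod_empty, mul_one, ← mul_assoc,
    prod_Icc_succ_mul_prod_Icc_succ _ hak (by omega : k ≤ N - m)]

theorem Lfn_add_eq_mul {a k d N j : ℕ} (hN : k + d = N) (hj : a + j ≤ k) :
    Lfn f0 f1 a N (j + d) xv = Lfn f0 f1 a k j xv * Lfn f0 f1 k N d xv := by
  subst hN
  unfold Lfn
  rw [show k + d - (j + d) = k - j by omega, Nat.add_sub_cancel,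
    Icc_eq_empty (by omega : ¬k + 1 ≤ k), prod_empty, one_mul, mul_assoc,
    prod_Icc_succ_mul_prod_Icc_succ _ (by omega : k - j ≤ k) (by omega : k ≤ k + d)]

end Likelihood

section Posterior

/-- `A_m`: the terms of `S(x₀, …, x_m)` other than the no-change term `(1 - π) p^m L₀`,
reindexed by `j = m - i`. -/
def changeWeight {E : Type*} (f0 f1 : E → E → ℝ) (p π : ℝ) (m : ℕ) (xv : ℕ → E) : ℝ :=
  π * Lfn f0 f1 0 m m xv +
    (1 - π) * ∑ j ∈ range m, p ^ (m - 1 - j) * (1 - p) * Lfn f0 f1 0 m (j + 1) xv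

variable {E : Type*} (f0 f1 : E → E → ℝ) (p π : ℝ) (xv : ℕ → E)

theorem Sfn_eq_changeWeight_add (m : ℕ) :
    Sfn f0 f1 p π m xv = changeWeight f0 f1 p π m xv + (1 - π) * p ^ m * Lfn f0 f1 0 m 0 xv := by
  have hreindex : ∑ i ∈ Icc 1 m, p ^ (i - 1) * (1 - p) * Lfn f0 f1 0 m (m - i + 1) xv =
      ∑ j ∈ range m, p ^ (m - 1 - j) * (1 - p) * Lfn f0 f1 0 m (j + 1) xv := by
    refine sum_nbij' (fun i => m - i) (fun j => m - j) ?_ ?_ ?_ ?_ ?_ <;> intro i hi <;>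
      simp only [mem_Icc, mem_range] at hi ⊢
    iterate 4 omega
    rw [show m - 1 - (m - i) = i - 1 by omega]
  unfold Sfn changeWeight
  rw [hreindex]
  ring

theorem changeWeight_add (k l : ℕ) :
    changeWeight f0 f1 p π (k + l + 1) xv =
      changeWeight f0 f1 p π k xv * Lfn f0 f1 k (k + l + 1) (l + 1) xv +
        (1 - π) * p ^ k * Lfn f0 f1 0 k 0 xv *
          ∑ i ∈ range (l + 1), p ^ (l - i) * (1 - p) * Lfn f0 f1 k (k + l + 1) (i + 1) xv := by
  have hfull : Lfn f0 f1 0 (k + l + 1) (k + l + 1) xv =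
      Lfn f0 f1 0 k k xv * Lfn f0 f1 k (k + l + 1) (l + 1) xv :=
    Lfn_add_eq_mul f0 f1 xv (d := l + 1) rfl (by omega)
  have hlateChange : ∑ j ∈ range (l + 1),
      p ^ (k + l + 1 - 1 - j) * (1 - p) * Lfn f0 f1 0 (k + l + 1) (j + 1) xv =
      p ^ k * Lfn f0 f1 0 k 0 xv *
        ∑ i ∈ range (l + 1), p ^ (l - i) * (1 - p) * Lfn f0 f1 k (k + l + 1) (i + 1) xv := by
    rw [mul_sum]
    refine sum_congr rfl fun j hj => ?_
    rw [mem_range] at hj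
    rw [show k + l + 1 - 1 - j = k + (l - j) by omega, pow_add,
      Lfn_eq_mul_of_le f0 f1 xv (k := k) (Nat.zero_le k) (by omega)]
    ring
  have hearlyChange : ∑ t ∈ range k,
      p ^ (k + l + 1 - 1 - (l + 1 + t)) * (1 - p) * Lfn f0 f1 0 (k + l + 1) (l + 1 + t + 1) xv =
      (∑ t ∈ range k, p ^ (k - 1 - t) * (1 - p) * Lfn f0 f1 0 k (t + 1) xv) *
        Lfn f0 f1 k (k + l + 1) (l + 1) xv := by
    rw [sum_mul]
    refine sum_congr rfl fun t ht => ?_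
    rw [mem_range] at ht
    rw [show k + l + 1 - 1 - (l + 1 + t) = k - 1 - t by omega,
      show l + 1 + t + 1 = t + 1 + (l + 1) by omega,
      Lfn_add_eq_mul f0 f1 xv (a := 0) (k := k) (d := l + 1) (N := k + l + 1) (j := t + 1) rfl
        (by omega)]
    ring
  unfold changeWeight
  rw [hfull, show range (k + l + 1) = range (l + 1 + k) by congr 1; omega,
    sum_range_add, hlateChange, hearlyChange]
  ring

variable {f0 f1 p π xv}

theorem Sfn_mul_PiPost {m : ℕ} (h : Sfn f0 f1 p π m xv ≠ 0) :
    Sfn f0 f1 p π m xv * PiPost f0 f1 p π m xv = changeWeight f0 f1 p π m xv := by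
  rw [PiPost, mul_sub, mul_one, mul_div_cancel₀ _ h, Sfn_eq_changeWeight_add]
  ring

theorem Sfn_mul_one_sub_PiPost {m : ℕ} (h : Sfn f0 f1 p π m xv ≠ 0) :
    Sfn f0 f1 p π m xv * (1 - PiPost f0 f1 p π m xv) = (1 - π) * p ^ m * Lfn f0 f1 0 m 0 xv := by
  rw [PiPost, sub_sub_cancel, mul_div_cancel₀ _ h]

theorem PiPost_eq_changeWeight_div {m : ℕ} (h : Sfn f0 f1 p π m xv ≠ 0) :
    PiPost f0 f1 p π m xv = changeWeight f0 f1 p π m xv / Sfn f0 f1 p π m xv :=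
  eq_div_of_mul_eq h (by rw [mul_comm, Sfn_mul_PiPost h])

theorem changeWeight_add_eq_mul {k l : ℕ} (h : Sfn f0 f1 p π k xv ≠ 0) :
    changeWeight f0 f1 p π (k + l + 1) xv = Sfn f0 f1 p π k xv *
      (PiPost f0 f1 p π k xv * Lfn f0 f1 k (k + l + 1) (l + 1) xv +
        (1 - PiPost f0 f1 p π k xv) * (1 - p) *
          ∑ i ∈ range (l + 1), p ^ (l - i) * Lfn f0 f1 k (k + l + 1) (i + 1) xv) := by
  have hsum : (1 - p) * ∑ i ∈ range (l + 1), p ^ (l - i) * Lfn f0 f1 k (k + l + 1) (i + 1) xv =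
      ∑ i ∈ range (l + 1), p ^ (l - i) * (1 - p) * Lfn f0 f1 k (k + l + 1) (i + 1) xv := by
    rw [mul_sum]
    exact sum_congr rfl fun i _ => by ring
  rw [changeWeight_add, ← Sfn_mul_PiPost h, ← Sfn_mul_one_sub_PiPost h, ← hsum]
  ring

theorem Sfn_add_eq_mul {k l : ℕ} (h : Sfn f0 f1 p π k xv ≠ 0) :
    Sfn f0 f1 p π (k + l + 1) xv =
      Sfn f0 f1 p π k xv * Gfn f0 f1 p k l xv (PiPost f0 f1 p π k xv) := by
  have hnoChange : Lfn f0 f1 0 (k + l + 1) 0 xv =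
      Lfn f0 f1 0 k 0 xv * Lfn f0 f1 k (k + l + 1) 0 xv :=
    Lfn_eq_mul_of_le f0 f1 xv (Nat.zero_le k) (by omega)
  rw [Sfn_eq_changeWeight_add, changeWeight_add, hnoChange, Gfn]
  linear_combination (-Lfn f0 f1 k (k + l + 1) (l + 1) xv) * Sfn_mul_PiPost h -
    ((∑ i ∈ range (l + 1), p ^ (l - i) * (1 - p) * Lfn f0 f1 k (k + l + 1) (i + 1) xv) +
      p ^ (l + 1) * Lfn f0 f1 k (k + l + 1) 0 xv) * Sfn_mul_one_sub_PiPost h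

end Posterior

theorem stmt10_general {E : Type*} (f0 f1 : E → E → ℝ) (p π : ℝ)
    (n l : ℕ) (hl : l < n) (xv : ℕ → E)
    (hS1 : Sfn f0 f1 p π (n - l - 1) xv ≠ 0) (hS2 : Sfn f0 f1 p π n xv ≠ 0) :
    PiPost f0 f1 p π n xv =
      (PiPost f0 f1 p π (n - l - 1) xv * Lfn f0 f1 (n - l - 1) n (l + 1) xv +
          (1 - PiPost f0 f1 p π (n - l - 1) xv) * (1 - p) *
            ∑ k ∈ Finset.range (l + 1), p ^ (l - k) * Lfn f0 f1 (n - l - 1) n (k + 1) xv) /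
        Gfn f0 f1 p (n - l - 1) l xv (PiPost f0 f1 p π (n - l - 1) xv) := by
  obtain ⟨k, rfl⟩ : ∃ k, n = k + l + 1 := ⟨n - l - 1, by omega⟩
  rw [show k + l + 1 - l - 1 = k by omega] at hS1 ⊢
  rw [PiPost_eq_changeWeight_div hS2, changeWeight_add_eq_mul hS1, Sfn_add_eq_mul hS1,
    mul_div_mul_left _ _ hS1]

/-- Recursive formula for the posterior: for `0 ≤ l < n`, with
`Π_m = 1 - (1-π) p^m L₀(x₀,…,x_m)/S(x₀,…,x_m)`,
`Π_n = (Π_{n-l-1} L_{l+1} + (1-Π_{n-l-1}) q ∑_{k=0}^{l} p^{l-k} L_{k+1}) / G_{l+1}(⋯, Π_{n-l-1})`,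
all `L`'s evaluated at `(x_{n-l-1}, …, x_n)`. -/
theorem stmt10 {E : Type*} (f0 f1 : E → E → ℝ) (p π : ℝ)
    (hp : p ∈ Set.Ioo (0 : ℝ) 1) (hπ : π ∈ Set.Ioo (0 : ℝ) 1)
    (n l : ℕ) (hn : 1 ≤ n) (hl : l < n) (xv : ℕ → E)
    (hS1 : Sfn f0 f1 p π (n - l - 1) xv ≠ 0) (hS2 : Sfn f0 f1 p π n xv ≠ 0) :
    PiPost f0 f1 p π n xv =
      (PiPost f0 f1 p π (n - l - 1) xv * Lfn f0 f1 (n - l - 1) n (l + 1) xv +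
          (1 - PiPost f0 f1 p π (n - l - 1) xv) * (1 - p) *
            ∑ k ∈ Finset.range (l + 1), p ^ (l - k) * Lfn f0 f1 (n - l - 1) n (k + 1) xv) /
        Gfn f0 f1 p (n - l - 1) l xv (PiPost f0 f1 p π (n - l - 1) xv) :=
  stmt10_general f0 f1 p π n l hl xv hS1 hS2
end

section
/- One-step posterior update: in the notation below, for every n ≥ 1 and every (x₀, …, x_{n+1}) ∈ E^{n+2} with S(x₀, …, x_n) ≠ 0 and S(x₀, …, x_{n+1}) ≠ 0, defining Π_m := 1 − (1 − π) p^m L₀(x₀, …, x_m) / S(x₀, …, x_m), one has Π_{n+1} = f¹(x_n, x_{n+1}) (q + p Π_n) / G₁(x_n, x_{n+1}, Π_n), where G₁(z, y, α) = α f¹(z, y) + (1 − α)(q f¹(z, y) + p f⁰(z, y)). -/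
/-!
Appending `x_{n+1}` multiplies each `L_m` with `m ≥ 1` by `f¹(x_n, x_{n+1})` and `L₀` by
`f⁰(x_n, x_{n+1})`. Since `(1 - Π_n) S_n = (1 - π) p^n L₀`, this gives `S_{n+1} = G₁(Π_n) S_n`
and `(1 - π) p^{n+1} L₀(x₀, …, x_{n+1}) = p f⁰ (1 - Π_n) S_n`. Dividing, `S_n` cancels and
`1 - Π_{n+1} = p f⁰ (1 - Π_n) / G₁(Π_n)`, which is the claim since `G₁(α) - p f⁰ (1 - α) = f¹ (q + p α)`.
-/

open Finset

/-- `G₁(z, y, α) = α f¹(z,y) + (1-α)(q f¹(z,y) + p f⁰(z,y))`. -/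
def G1fn {E : Type*} (f0 f1 : E → E → ℝ) (p : ℝ) (z y : E) (α : ℝ) : ℝ :=
  α * f1 z y + (1 - α) * ((1 - p) * f1 z y + p * f0 z y)

section Recursion

variable {E : Type*} (f0 f1 : E → E → ℝ) (xv : ℕ → E)

theorem Lfn_succ_succ (k N m : ℕ) :
    Lfn f0 f1 k (N + 1) (m + 1) xv = Lfn f0 f1 k N m xv * f1 (xv N) (xv (N + 1)) := by
  unfold Lfn
  rw [Nat.add_sub_add_right, Finset.prod_Icc_succ_top (by omega), Nat.add_sub_cancel, mul_assoc]

theorem Lfn_succ_zero {k N : ℕ} (hk : k ≤ N) :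
    Lfn f0 f1 k (N + 1) 0 xv = Lfn f0 f1 k N 0 xv * f0 (xv N) (xv (N + 1)) := by
  unfold Lfn
  rw [Nat.sub_zero, Nat.sub_zero, Finset.prod_Icc_succ_top (by omega), Nat.add_sub_cancel]
  simp only [Finset.Icc_eq_empty_of_lt (Nat.lt_succ_self _), Finset.prod_empty, mul_one]

variable (p π : ℝ)

-- The new term `i = n + 1` of the sum is `p^n q L₀ f¹`, which turns `p^n` into `p^(n+1)`.
theorem Sfn_succ (n : ℕ) :
    Sfn f0 f1 p π (n + 1) xv =
      f1 (xv n) (xv (n + 1)) * (Sfn f0 f1 p π n xv - (1 - π) * p ^ (n + 1) * Lfn f0 f1 0 n 0 xv) +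
        (1 - π) * p ^ (n + 1) * Lfn f0 f1 0 n 0 xv * f0 (xv n) (xv (n + 1)) := by
  have hsum : ∀ i ∈ Finset.Icc 1 n,
      p ^ (i - 1) * (1 - p) * Lfn f0 f1 0 (n + 1) (n + 1 - i + 1) xv =
        p ^ (i - 1) * (1 - p) * Lfn f0 f1 0 n (n - i + 1) xv * f1 (xv n) (xv (n + 1)) := by
    intro i hi
    rw [Finset.mem_Icc] at hi
    rw [show n + 1 - i + 1 = n - i + 1 + 1 by omega, Lfn_succ_succ]
    ring
  unfold Sfn
  rw [Finset.sum_Icc_succ_top (by omega), Finset.sum_congr rfl hsum, ← Finset.sum_mul,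
    Nat.sub_self, Lfn_succ_succ, Lfn_succ_succ, Lfn_succ_zero _ _ _ n.zero_le, Nat.add_sub_cancel]
  ring

variable {f0 f1 xv p π}

theorem one_sub_PiPost_mul_Sfn {n : ℕ} (hS : Sfn f0 f1 p π n xv ≠ 0) :
    (1 - PiPost f0 f1 p π n xv) * Sfn f0 f1 p π n xv = (1 - π) * p ^ n * Lfn f0 f1 0 n 0 xv := by
  unfold PiPost
  field_simp
  ring

theorem Sfn_succ_eq_G1fn_mul {n : ℕ} (hS : Sfn f0 f1 p π n xv ≠ 0) :
    Sfn f0 f1 p π (n + 1) xv =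
      G1fn f0 f1 p (xv n) (xv (n + 1)) (PiPost f0 f1 p π n xv) * Sfn f0 f1 p π n xv := by
  rw [Sfn_succ, G1fn]
  linear_combination p * (f1 (xv n) (xv (n + 1)) - f0 (xv n) (xv (n + 1))) *
    one_sub_PiPost_mul_Sfn hS

end Recursion

theorem stmt11_general {E : Type*} (f0 f1 : E → E → ℝ) (p π : ℝ)
    (n : ℕ) (xv : ℕ → E)
    (hS1 : Sfn f0 f1 p π n xv ≠ 0) (hS2 : Sfn f0 f1 p π (n + 1) xv ≠ 0) :
    PiPost f0 f1 p π (n + 1) xv =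
      f1 (xv n) (xv (n + 1)) * ((1 - p) + p * PiPost f0 f1 p π n xv) /
        G1fn f0 f1 p (xv n) (xv (n + 1)) (PiPost f0 f1 p π n xv) := by
  set α := PiPost f0 f1 p π n xv
  have hG := Sfn_succ_eq_G1fn_mul hS1
  have hGne : G1fn f0 f1 p (xv n) (xv (n + 1)) α ≠ 0 := left_ne_zero_of_mul (hG ▸ hS2)
  have hL := one_sub_PiPost_mul_Sfn hS1
  have hpost : (1 - π) * p ^ (n + 1) * Lfn f0 f1 0 (n + 1) 0 xv =
      p * f0 (xv n) (xv (n + 1)) * (1 - α) * Sfn f0 f1 p π n xv := by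
    rw [Lfn_succ_zero _ _ _ n.zero_le]
    linear_combination (-p * f0 (xv n) (xv (n + 1))) * hL
  rw [PiPost, hpost, hG, mul_div_mul_right _ _ hS1, eq_div_iff hGne, sub_mul,
    div_mul_cancel₀ _ hGne, G1fn]
  ring

/-- One-step posterior update: with
`Π_m = 1 - (1-π) p^m L₀(x₀,…,x_m)/S(x₀,…,x_m)`,
`Π_{n+1} = f¹(x_n, x_{n+1})(q + p Π_n) / G₁(x_n, x_{n+1}, Π_n)`. -/
theorem stmt11 {E : Type*} (f0 f1 : E → E → ℝ) (p π : ℝ)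
    (hp : p ∈ Set.Ioo (0 : ℝ) 1) (hπ : π ∈ Set.Ioo (0 : ℝ) 1)
    (n : ℕ) (hn : 1 ≤ n) (xv : ℕ → E)
    (hS1 : Sfn f0 f1 p π n xv ≠ 0) (hS2 : Sfn f0 f1 p π (n + 1) xv ≠ 0) :
    PiPost f0 f1 p π (n + 1) xv =
      f1 (xv n) (xv (n + 1)) * ((1 - p) + p * PiPost f0 f1 p π n xv) /
        G1fn f0 f1 p (xv n) (xv (n + 1)) (PiPost f0 f1 p π n xv) :=
  stmt11_general f0 f1 p π n xv hS1 hS2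
end
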